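/- Let φ : k → SL(4,k) be a map such that φ(t+t') = φ(t)·φ(t') for all t,t' ∈ k, every matrix entry of φ(t) is a polynomial function of t, and φ(t) is upper triangular with all diagonal entries equal to 1 for every t ∈ k; assume moreover that none of the three superdiagonal entry polynomials t ↦ φ(t)₁₂, t ↦ φ(t)₂₃, t ↦ φ(t)₃₄ is identically zero. Let d₁ ≥ d₂ ≥ 0 be integers, set ω(u) = diag(u^{d₁}, u^{d₂}, u^{−d₂}, u^{−d₁}) for u ∈ kˣ, and assume ω(u)·φ(t)·ω(u)⁻¹ = φ(u²·t) for all t ∈ k and u ∈ kˣ. Then p ≥ 5, and there exist an integer e ≥ 0 and P ∈ GL(4,k) such that d₁ = 3·p^e, d₂ = p^e, P commutes with ω(u) for every u ∈ kˣ, and, writing q = p^e, P⁻¹·φ(t)·P = [[1, t^q, (1/2)t^{2q}, (1/6)t^{3q}], [0, 1, t^q, (1/2)t^{2q}], [0, 0, 1, t^q], [0, 0, 0, 1]] for every t ∈ k. -/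

import Mathlib

/-!
Each superdiagonal entry of `φ` is an additive polynomial which the torus scales homogeneously,
hence a monomial `c t ^ p ^ e` of weight `2 p ^ e`; since `φ t` and `φ t'` commute, the three
exponents agree, so `d₂ = q` and `d₁ = 3 q` with `q = p ^ e`. The next entries then satisfy
`b (t + t') = b t + b t' + αδ t^q t'^q` and a similar identity with a cubic cross term, which
evaluated at small integers are inconsistent in characteristic `2` and `3`. Otherwise
`b - αδ/2 t^(2q)` and `c - αδγ/6 t^(3q)` are additive homogeneous polynomials of weights
`2 (2q)` and `2 (3q)`, not of the form `2 p ^ e`, so they vanish; a diagonal conjugation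
commuting with the torus then normalizes `α, δ, γ` to `1`.
-/

open Matrix Polynomial

/-- The antisymmetric diagonal cocharacter `ω(u) = diag(u^{d₁}, u^{d₂}, u^{−d₂}, u^{−d₁})`. -/
noncomputable def omegaD (k : Type*) [Field k] (d₁ d₂ : ℤ) (u : kˣ) :
    Matrix (Fin 4) (Fin 4) k :=
  Matrix.diagonal ![(u : k) ^ d₁, (u : k) ^ d₂, (u : k) ^ (-d₂), (u : k) ^ (-d₁)]

section ScalarFunctions

variable {k : Type*} [Field k]

theorem eq_zero_of_forall_units_zpow_eq_one [Infinite k] {m : ℤ}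
    (h : ∀ u : kˣ, (u : k) ^ m = 1) : m = 0 := by
  classical
  by_contra hm
  obtain ⟨x, hx⟩ := Infinite.exists_notMem_finset (insert 0 (nthRootsFinset m.natAbs (1 : k)))
  rw [Finset.mem_insert, mem_nthRootsFinset (Int.natAbs_pos.2 hm), not_or] at hx
  apply hx.2
  have hxm : x ^ m = 1 := h (Units.mk0 x hx.1)
  rcases Int.natAbs_eq m with hm' | hm'
  · rwa [hm', zpow_natCast] at hxm
  · rwa [hm', _root_.zpow_neg, zpow_natCast, inv_eq_one] at hxm

theorem eq_of_forall_pow_eq [Infinite k] {m m' : ℕ} (h : ∀ t : k, t ^ m = t ^ m') : m = m' := by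
  simpa using congrArg natDegree (Polynomial.funext (R := k) (p := X ^ m) (q := X ^ m')
    (by simpa using h))

theorem exists_eq_mul_pow_of_homogeneous [Infinite k] {g : k → k}
    (hpoly : ∃ P : k[X], ∀ t, g t = P.eval t) {n : ℤ}
    (hh : ∀ (u : kˣ) (t : k), g ((u : k) ^ 2 * t) = (u : k) ^ n * g t)
    (hg : ¬∀ t, g t = 0) :
    ∃ (m : ℕ) (c : kˣ), (∀ t, g t = c * t ^ m) ∧ n = 2 * m := by
  obtain ⟨P, hP⟩ := hpoly
  have weight_of_coeff_ne_zero : ∀ i, P.coeff i ≠ 0 → n = 2 * i := by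
    intro i hi
    have hcomp : ∀ u : kˣ, P.comp (C ((u : k) ^ 2) * X) = C ((u : k) ^ n) * P := fun u =>
      Polynomial.funext fun t => by simp [← hP, hh]
    have hu : ∀ u : kˣ, (u : k) ^ (2 * (i : ℤ) - n) = 1 := by
      intro u
      have hi' := congrArg (coeff · i) (hcomp u)
      simp only [comp_C_mul_X_coeff, coeff_C_mul, ← pow_mul] at hi'
      rw [zpow_sub₀ u.ne_zero, div_eq_one_iff_eq (zpow_ne_zero _ u.ne_zero)]
      exact_mod_cast mul_left_cancel₀ hi (hi'.trans (mul_comm _ _))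
    linarith [eq_zero_of_forall_units_zpow_eq_one hu]
  obtain ⟨m, hm⟩ : ∃ m, P.coeff m ≠ 0 := by
    by_contra! h
    exact hg fun t => by simp [hP, show P = 0 from Polynomial.ext (by simpa using h)]
  have hPm : P = C (P.coeff m) * X ^ m := by
    ext i
    rw [coeff_C_mul_X_pow]
    split_ifs with him
    · rw [him]
    · by_contra hi
      have := weight_of_coeff_ne_zero i hi
      have := weight_of_coeff_ne_zero m hm
      omega
  refine ⟨m, Units.mk0 _ hm, fun t => ?_, weight_of_coeff_ne_zero m hm⟩
  rw [hP, Units.val_mk0]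
  nth_rewrite 1 [hPm]
  simp

theorem two_ne_zero_of_add_eq {b : k → k} {K : k} {q : ℕ} (hq : q ≠ 0) (hK : K ≠ 0)
    (hb : ∀ t t', b (t + t') = b t + b t' + K * (t ^ q * t' ^ q)) : (2 : k) ≠ 0 := by
  intro h2
  have h0 := hb 0 0
  have h11 := hb 1 1
  simp only [add_zero, zero_pow hq, mul_zero] at h0
  rw [one_add_one_eq_two, h2, one_pow, mul_one, mul_one] at h11
  exact hK (by linear_combination -h11 - h0 - b 1 * h2)

theorem three_ne_zero_of_add_eq {c : k → k} {K : k} {q : ℕ} (hq : Odd q) (hK : K ≠ 0)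
    (hc : ∀ t t', c (t + t') = c t + c t' + K * (t ^ q * t' ^ (2 * q) + t ^ (2 * q) * t' ^ q)) :
    (3 : k) ≠ 0 := by
  intro h3
  have h2q : (2 : k) ^ q = -1 := by rw [show (2 : k) = -1 by linear_combination h3, hq.neg_one_pow]
  have h0 := hc 0 0
  have h11 := hc 1 1
  have h21 := hc 2 1
  simp only [add_zero, zero_pow hq.pos.ne', mul_zero, zero_mul] at h0
  simp only [one_add_one_eq_two, one_pow, mul_one] at h11
  simp only [show (2 : k) + 1 = 0 by linear_combination h3, pow_mul', h2q, one_pow, mul_one] at h21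
  exact hK (by linear_combination h0 + h21 + h11 + (c 1 + K) * h3)

end ScalarFunctions

theorem Nat.Prime.mul_pow_ne_pow {r p : ℕ} (hr : r.Prime) (hp : p.Prime) (hpr : p ≠ r)
    (e e' : ℕ) : r * p ^ e ≠ p ^ e' := fun h =>
  hpr <| ((Nat.prime_dvd_prime_iff_eq hr hp).1 <| hr.dvd_of_dvd_pow (h ▸ dvd_mul_right r _)).symm

theorem CharP.ne_of_natCast_ne_zero {R : Type*} [AddMonoidWithOne R] {p : ℕ} [CharP R p] {r : ℕ}
    (h : (r : R) ≠ 0) : p ≠ r := by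
  rintro rfl
  exact h (CharP.cast_eq_zero R p)

theorem add_pow_mul_char_pow {R : Type*} [CommSemiring R] (p : ℕ) [ExpChar R p] (x y : R)
    (m e : ℕ) : (x + y) ^ (m * p ^ e) = (x ^ p ^ e + y ^ p ^ e) ^ m := by
  rw [mul_comm, pow_mul, add_pow_expChar_pow]

theorem Polynomial.exists_eq_pow_of_X_add_one_pow_eq {R : Type*} [CommRing R] [IsDomain R]
    (p : ℕ) [Fact p.Prime] [CharP R p] {m : ℕ} (h : (X + 1 : R[X]) ^ m = X ^ m + 1) :
    ∃ e, m = p ^ e := by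
  induction m using Nat.strong_induction_on with
  | _ m ih =>
  rcases Nat.lt_or_ge m 2 with hm | hm
  · interval_cases m
    · simpa using congrArg (eval 0) h
    · exact ⟨0, rfl⟩
  -- If `p ∤ m`, the derivative gives `(X + 1) ^ (m - 1) = X ^ (m - 1)`; else take a `p`-th root.
  obtain ⟨m', rfl⟩ : p ∣ m := by
    rw [← CharP.cast_eq_zero_iff R p]
    by_contra hm0
    have hd := congrArg derivative h
    simp only [derivative_pow, derivative_add, derivative_X, derivative_one, add_zero,
      mul_one] at hd
    have h0 := congrArg (eval 0) (mul_left_cancel₀ (C_ne_zero.2 hm0) hd)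
    simp [zero_pow (by omega : m - 1 ≠ 0)] at h0
  have hm' : m' ≠ 0 := by rintro rfl; simp at hm
  obtain ⟨e, rfl⟩ := ih m' (lt_mul_left (by omega) (Fact.out : p.Prime).one_lt) <|
    frobenius_inj R[X] p <| by
      simp only [frobenius_def, add_pow_char, one_pow, ← pow_mul, mul_comm m' p, h]
  exact ⟨e + 1, by ring⟩

section CharP

variable {k : Type*} [Field k] [Infinite k] {p : ℕ} [Fact p.Prime] [CharP k p]

theorem exists_eq_mul_pow_char_pow_of_additive {g : k → k}
    (hpoly : ∃ P : k[X], ∀ t, g t = P.eval t) (hadd : ∀ t t', g (t + t') = g t + g t') {n : ℤ}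
    (hh : ∀ (u : kˣ) (t : k), g ((u : k) ^ 2 * t) = (u : k) ^ n * g t)
    (hg : ¬∀ t, g t = 0) :
    ∃ (e : ℕ) (c : kˣ), (∀ t, g t = c * t ^ p ^ e) ∧ n = 2 * p ^ e := by
  obtain ⟨m, c, hgm, rfl⟩ := exists_eq_mul_pow_of_homogeneous hpoly hh hg
  have hm : m ≠ 0 := by
    rintro rfl
    simpa [hgm] using hadd 0 0
  obtain ⟨e, rfl⟩ := Polynomial.exists_eq_pow_of_X_add_one_pow_eq p (R := k) <|
    Polynomial.funext fun t => mul_left_cancel₀ c.ne_zero <| by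
      simpa [hgm, mul_add] using hadd t 1
  exact ⟨e, c, hgm, by push_cast; ring⟩

theorem eq_mul_pow_of_add_eq {g : k → k}
    (hpoly : ∃ P : k[X], ∀ t, g t = P.eval t) {n : ℤ}
    (hh : ∀ (u : kˣ) (t : k), g ((u : k) ^ 2 * t) = (u : k) ^ n * g t)
    {N : ℕ} (hn : n = 2 * N) (hN : ∀ e, N ≠ p ^ e) (c : k)
    (hadd : ∀ t t', g (t + t') = g t + g t' + c * ((t + t') ^ N - t ^ N - t' ^ N)) (t : k) :
    g t = c * t ^ N := by
  by_contra hgt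
  obtain ⟨P, hP⟩ := hpoly
  obtain ⟨e, -, -, he⟩ := exists_eq_mul_pow_char_pow_of_additive (p := p)
    (g := fun t => g t - c * t ^ N) ⟨P - C c * X ^ N, fun t => by simp [hP]⟩
    (fun t t' => by rw [hadd]; ring) (n := n) (fun u t => by
      rw [hh, hn, ← Nat.cast_ofNat, ← Nat.cast_mul, zpow_natCast]; ring)
    (fun h => hgt (sub_eq_zero.1 (h t)))
  have h2 : 2 * N = 2 * p ^ e := by exact_mod_cast hn.symm.trans he
  exact hN e (by omega)

end CharP

theorem Matrix.mul_apply_of_unitriangular {n R : Type*} [Fintype n] [LinearOrder n]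
    [LocallyFiniteOrder n] [Semiring R] {A B : Matrix n n R}
    (hA : A.BlockTriangular id) (hB : B.BlockTriangular id)
    (hA₁ : ∀ i, A i i = 1) (hB₁ : ∀ i, B i i = 1) {i j : n} (hij : i < j) :
    (A * B) i j = A i j + B i j + ∑ l ∈ Finset.Ioo i j, A i l * B l j := by
  rw [mul_apply, ← Finset.sum_subset (Finset.subset_univ (Finset.Icc i j)),
    Finset.Icc_eq_cons_Ioc hij.le, Finset.sum_cons, Finset.Ioc_eq_cons_Ioo hij, Finset.sum_cons,
    hA₁, hB₁, one_mul, mul_one, ← add_assoc, add_comm (B i j)]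
  intro l _ hl
  rcases lt_or_gt_of_ne (show l ≠ i by rintro rfl; simp [hij.le] at hl) with hli | hli
  · rw [hA hli, zero_mul]
  · rw [hB (lt_of_not_ge fun hlj => hl (Finset.mem_Icc.2 ⟨hli.le, hlj⟩)), mul_zero]

theorem Matrix.diagonal_zpow_mul_mul_inv_apply {k n : Type*} [Field k] [Fintype n]
    [DecidableEq n] (u : kˣ) (w : n → ℤ) (A : Matrix n n k) (i j : n) :
    (diagonal (fun i => (u : k) ^ w i) * A * (diagonal fun i => (u : k) ^ w i)⁻¹) i j =
      (u : k) ^ (w i - w j) * A i j := by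
  have hinv : (diagonal fun i => (u : k) ^ w i)⁻¹ = diagonal fun i => (u : k) ^ (-w i) :=
    inv_eq_right_inv <| by
      rw [diagonal_mul_diagonal, ← diagonal_one]
      simp_rw [← zpow_add₀ u.ne_zero, add_neg_cancel, zpow_zero]
  rw [hinv, mul_diagonal, diagonal_mul, sub_eq_add_neg, zpow_add₀ u.ne_zero]
  ring

def Matrix.GeneralLinearGroup.diagonal {n R : Type*} [Fintype n] [DecidableEq n] [CommRing R]
    (v : n → Rˣ) : GL n R :=
  ⟨Matrix.diagonal fun i => v i, Matrix.diagonal fun i => ↑(v i)⁻¹,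
    by simp [diagonal_mul_diagonal], by simp [diagonal_mul_diagonal]⟩

/-- `apply_sq_mul` is the entrywise form of `diag(u ^ w) * M t * diag(u ^ w)⁻¹ = M (u ^ 2 * t)`. -/
structure IsUnitriangularOneParam {k : Type*} [Field k] {n : ℕ}
    (M : k → Matrix (Fin n) (Fin n) k) (w : Fin n → ℤ) : Prop where
  map_add : ∀ t t', M (t + t') = M t * M t'
  polynomial : ∀ i j, ∃ P : k[X], ∀ t, M t i j = P.eval t
  blockTriangular : ∀ t, (M t).BlockTriangular id
  apply_self : ∀ t i, M t i i = 1
  apply_sq_mul : ∀ (u : kˣ) t i j, M ((u : k) ^ 2 * t) i j = (u : k) ^ (w i - w j) * M t i j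

namespace IsUnitriangularOneParam

variable {k : Type*} [Field k] {n : ℕ} {M : k → Matrix (Fin n) (Fin n) k} {w : Fin n → ℤ}
  (hM : IsUnitriangularOneParam M w)
include hM

theorem apply_add {i j : Fin n} (hij : i < j) (t t' : k) :
    M (t + t') i j = M t i j + M t' i j + ∑ l ∈ Finset.Ioo i j, M t i l * M t' l j := by
  rw [hM.map_add]
  exact mul_apply_of_unitriangular (hM.blockTriangular t) (hM.blockTriangular t')
    (hM.apply_self t) (hM.apply_self t') hij

theorem apply_add_of_Ioo_eq_singleton {i j l : Fin n} (hIoo : Finset.Ioo i l = {j})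
    (t t' : k) : M (t + t') i l = M t i l + M t' i l + M t i j * M t' j l := by
  have hj : j ∈ Finset.Ioo i l := hIoo ▸ Finset.mem_singleton_self j
  rw [hM.apply_add ((Finset.mem_Ioo.1 hj).1.trans (Finset.mem_Ioo.1 hj).2), hIoo,
    Finset.sum_singleton]

theorem apply_mul_apply_comm_of_Ioo_eq_singleton {i j l : Fin n} (hIoo : Finset.Ioo i l = {j})
    (t t' : k) : M t i j * M t' j l = M t' i j * M t j l := by
  have h := hM.apply_add_of_Ioo_eq_singleton hIoo t t'
  rw [add_comm t t', hM.apply_add_of_Ioo_eq_singleton hIoo] at h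
  linear_combination -h

variable [Infinite k]

theorem pow_eq_of_Ioo_eq_singleton {i j l : Fin n} (hIoo : Finset.Ioo i l = {j}) {α δ : kˣ}
    {m m' : ℕ} (ha : ∀ t, M t i j = α * t ^ m) (hd : ∀ t, M t j l = δ * t ^ m') : m = m' :=
  eq_of_forall_pow_eq fun t => mul_left_cancel₀ (α * δ).ne_zero <| by
    have h := hM.apply_mul_apply_comm_of_Ioo_eq_singleton hIoo t 1
    simp only [ha, hd, one_pow, mul_one] at h
    rw [Units.val_mul]
    linear_combination h

variable {p : ℕ} [Fact p.Prime] [CharP k p]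

theorem exists_apply_eq_of_covBy {i j : Fin n} (hij : i ⋖ j) (hne : ¬∀ t, M t i j = 0) :
    ∃ (e : ℕ) (c : kˣ), (∀ t, M t i j = c * t ^ p ^ e) ∧ w i - w j = 2 * p ^ e := by
  have hIoo : Finset.Ioo i j = ∅ := by rw [← Finset.coe_eq_empty, Finset.coe_Ioo, hij.Ioo_eq]
  refine exists_eq_mul_pow_char_pow_of_additive (hM.polynomial i j) (fun t t' => ?_)
    (hM.apply_sq_mul · · i j) hne
  rw [hM.apply_add hij.lt, hIoo, Finset.sum_empty, add_zero]

theorem apply_eq_of_Ioo_eq_singleton {i j l : Fin n} (hIoo : Finset.Ioo i l = {j}) {α δ : k}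
    {e : ℕ} (ha : ∀ t, M t i j = α * t ^ p ^ e) (hd : ∀ t, M t j l = δ * t ^ p ^ e)
    (hw : w i - w l = 4 * p ^ e) (h2 : (2 : k) ≠ 0) (t : k) :
    M t i l = α * δ / 2 * t ^ (2 * p ^ e) := by
  refine eq_mul_pow_of_add_eq (hM.polynomial i l) (hM.apply_sq_mul · · i l)
    (by rw [hw]; push_cast; ring)
    (Nat.prime_two.mul_pow_ne_pow Fact.out (CharP.ne_of_natCast_ne_zero (by exact_mod_cast h2)) e)
    _ (fun t t' => ?_) t
  rw [hM.apply_add_of_Ioo_eq_singleton hIoo, ha, hd, add_pow_mul_char_pow p]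
  field_simp
  ring

end IsUnitriangularOneParam

section Fin4

variable {k : Type*} [Field k]

def regularForm (q : ℕ) (α δ γ t : k) : Matrix (Fin 4) (Fin 4) k :=
  !![1, α * t ^ q, α * δ / 2 * t ^ (2 * q), α * δ * γ / 6 * t ^ (3 * q);
     0, 1, δ * t ^ q, δ * γ / 2 * t ^ (2 * q);
     0, 0, 1, γ * t ^ q;
     0, 0, 0, 1]

theorem IsUnitriangularOneParam.exists_eq_regularForm [Infinite k] {p : ℕ} [Fact p.Prime]
    [CharP k p] {M : k → Matrix (Fin 4) (Fin 4) k} {w : Fin 4 → ℤ}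
    (hM : IsUnitriangularOneParam M w) (h₀₁ : ¬∀ t, M t 0 1 = 0) (h₁₂ : ¬∀ t, M t 1 2 = 0)
    (h₂₃ : ¬∀ t, M t 2 3 = 0) :
    ∃ (e : ℕ) (α δ γ : kˣ), 5 ≤ p ∧ w 0 - w 1 = 2 * p ^ e ∧ w 1 - w 2 = 2 * p ^ e ∧
      ∀ t, M t = regularForm (p ^ e) (α : k) δ γ t := by
  have hp : p.Prime := Fact.out
  have hIoo₀₂ : Finset.Ioo (0 : Fin 4) 2 = {1} := by decide
  have hIoo₁₃ : Finset.Ioo (1 : Fin 4) 3 = {2} := by decide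
  obtain ⟨e, α, ha, hw₀₁⟩ := hM.exists_apply_eq_of_covBy (p := p) (by simp [Fin.covBy_iff]) h₀₁
  obtain ⟨e₂, δ, hd, hw₁₂⟩ := hM.exists_apply_eq_of_covBy (p := p) (by simp [Fin.covBy_iff]) h₁₂
  obtain ⟨e₃, γ, hf, hw₂₃⟩ := hM.exists_apply_eq_of_covBy (p := p) (by simp [Fin.covBy_iff]) h₂₃
  obtain rfl := Nat.pow_right_injective hp.two_le (hM.pow_eq_of_Ioo_eq_singleton hIoo₀₂ ha hd)
  obtain rfl := Nat.pow_right_injective hp.two_le (hM.pow_eq_of_Ioo_eq_singleton hIoo₁₃ hd hf)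
  have h2 : (2 : k) ≠ 0 := two_ne_zero_of_add_eq (b := (M · 0 2)) (pow_ne_zero e hp.ne_zero)
    (α * δ).ne_zero fun t t' => by
      rw [hM.apply_add_of_Ioo_eq_singleton hIoo₀₂, ha, hd, Units.val_mul]; ring
  have hp₂ : p ≠ 2 := CharP.ne_of_natCast_ne_zero (by exact_mod_cast h2)
  have hb := hM.apply_eq_of_Ioo_eq_singleton hIoo₀₂ ha hd (by linarith) h2
  have he := hM.apply_eq_of_Ioo_eq_singleton hIoo₁₃ hd hf (by linarith) h2
  have hc_add : ∀ t t', M (t + t') 0 3 = M t 0 3 + M t' 0 3 +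
      α * δ * γ / 2 * (t ^ p ^ e * t' ^ (2 * p ^ e) + t ^ (2 * p ^ e) * t' ^ p ^ e) := by
    intro t t'
    rw [hM.apply_add (by decide), show Finset.Ioo (0 : Fin 4) 3 = {1, 2} by decide,
      Finset.sum_pair (by decide), ha, he, hb, hf]
    ring
  have h3 := three_ne_zero_of_add_eq (c := (M · 0 3)) (hp.odd_of_ne_two hp₂).pow
    (by simp [h2]) hc_add
  have hp₃ : p ≠ 3 := CharP.ne_of_natCast_ne_zero (by exact_mod_cast h3)
  have h6 : (6 : k) ≠ 0 := by simpa [show (6 : k) = 2 * 3 by norm_num] using mul_ne_zero h2 h3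
  have hc : ∀ t, M t 0 3 = α * δ * γ / 6 * t ^ (3 * p ^ e) :=
    eq_mul_pow_of_add_eq (hM.polynomial 0 3) (hM.apply_sq_mul · · 0 3) (by push_cast; linarith)
      (Nat.prime_three.mul_pow_ne_pow hp hp₃ e) _ fun t t' => by
        rw [hc_add, add_pow_mul_char_pow p]
        field_simp
        ring
  refine ⟨e, α, δ, γ, hp.five_le_of_ne_two_of_ne_three hp₂ hp₃, hw₀₁, hw₁₂, fun t => ?_⟩
  ext i j
  fin_cases i <;> fin_cases j <;>
    first
    | exact hM.blockTriangular t (by decide)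
    | simp [regularForm, hM.apply_self, ha, hb, hc, hd, he, hf]

theorem diagonal_mul_regularForm_mul_inv (q : ℕ) (α δ γ : kˣ) (t : k) :
    (GeneralLinearGroup.diagonal ![1, α, α * δ, α * δ * γ] : Matrix (Fin 4) (Fin 4) k) *
        regularForm q (α : k) δ γ t *
        ((GeneralLinearGroup.diagonal ![1, α, α * δ, α * δ * γ])⁻¹ : GL (Fin 4) k) =
      !![1, t ^ q, (1 / 2 : k) * t ^ (2 * q), (1 / 6 : k) * t ^ (3 * q);
         0, 1, t ^ q, (1 / 2 : k) * t ^ (2 * q);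
         0, 0, 1, t ^ q;
         0, 0, 0, 1] := by
  ext i j
  fin_cases i <;> fin_cases j <;>
    simp [regularForm, GeneralLinearGroup.diagonal, mul_diagonal, diagonal_mul] <;> field_simp

theorem omegaD_eq_diagonal (d₁ d₂ : ℤ) (u : kˣ) :
    omegaD k d₁ d₂ u = diagonal fun i => (u : k) ^ ![d₁, d₂, -d₂, -d₁] i := by
  rw [omegaD]
  congr 1
  ext i
  fin_cases i <;> rfl

end Fin4

theorem stmt4 {k : Type*} [Field k] [IsAlgClosed k] {p : ℕ} [Fact p.Prime] [CharP k p]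
    (φ : k → SpecialLinearGroup (Fin 4) k)
    (hadd : ∀ t t' : k, φ (t + t') = φ t * φ t')
    (hpoly : ∀ i j : Fin 4, ∃ P : Polynomial k, ∀ t : k, (φ t).1 i j = P.eval t)
    (htri : ∀ (t : k) (i j : Fin 4), j < i → (φ t).1 i j = 0)
    (hdiag : ∀ (t : k) (i : Fin 4), (φ t).1 i i = 1)
    (hsup₁ : ¬∀ t : k, (φ t).1 0 1 = 0)
    (hsup₂ : ¬∀ t : k, (φ t).1 1 2 = 0)
    (hsup₃ : ¬∀ t : k, (φ t).1 2 3 = 0)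
    (d₁ d₂ : ℤ)
    (hconj : ∀ (t : k) (u : kˣ),
      omegaD k d₁ d₂ u * (φ t).1 * (omegaD k d₁ d₂ u)⁻¹ = (φ ((u : k) ^ 2 * t)).1) :
    5 ≤ p ∧
      ∃ (e : ℕ) (P : GL (Fin 4) k),
        d₁ = 3 * (p : ℤ) ^ e ∧
        d₂ = (p : ℤ) ^ e ∧
        (∀ u : kˣ, (P : Matrix (Fin 4) (Fin 4) k) * omegaD k d₁ d₂ u =
          omegaD k d₁ d₂ u * (P : Matrix (Fin 4) (Fin 4) k)) ∧
        ∀ t : k,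
          ((P⁻¹ : GL (Fin 4) k) : Matrix (Fin 4) (Fin 4) k) * (φ t).1 *
              (P : Matrix (Fin 4) (Fin 4) k) =
            !![1, t ^ p ^ e, (1 / 2 : k) * t ^ (2 * p ^ e), (1 / 6 : k) * t ^ (3 * p ^ e);
               0, 1, t ^ p ^ e, (1 / 2 : k) * t ^ (2 * p ^ e);
               0, 0, 1, t ^ p ^ e;
               0, 0, 0, 1] := by
  have hM : IsUnitriangularOneParam (fun t => (φ t).1) ![d₁, d₂, -d₂, -d₁] :=
    { map_add := fun t t' => by rw [hadd]; rfl
      polynomial := hpoly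
      blockTriangular := fun t i j => htri t i j
      apply_self := hdiag
      apply_sq_mul := fun u t i j => by
        rw [← hconj, omegaD_eq_diagonal, diagonal_zpow_mul_mul_inv_apply] }
  obtain ⟨e, α, δ, γ, hp, hw₀₁, hw₁₂, hφ⟩ := hM.exists_eq_regularForm hsup₁ hsup₂ hsup₃
  have hd₂ : d₂ = (p : ℤ) ^ e := by linarith [show d₂ - -d₂ = 2 * (p : ℤ) ^ e from hw₁₂]
  have hd₁ : d₁ = 3 * (p : ℤ) ^ e := by linarith [show d₁ - d₂ = 2 * (p : ℤ) ^ e from hw₀₁]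
  refine ⟨hp, e, (GeneralLinearGroup.diagonal ![1, α, α * δ, α * δ * γ])⁻¹, hd₁, hd₂,
    fun u => ?_, fun t => ?_⟩
  · simp [GeneralLinearGroup.diagonal, omegaD, diagonal_mul_diagonal, mul_comm]
  · rw [inv_inv, hφ, diagonal_mul_regularForm_mul_inv]
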